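/- Let d and n be positive natural numbers and let a_1, …, a_n be positive definite d×d complex matrices. Then Tr((a_1 + ⋯ + a_n)/n) ≥ Tr exp((1/n) ∑_{k=1}^n log a_k); i.e., the trace of the arithmetic mean dominates the tracial geometric mean. -/

import Mathlib

open scoped ComplexOrder

/-- `log A` for a (positive definite) matrix `A`, via the continuous functional calculus. -/
noncomputable def Matrix.cfcLog {d : ℕ} (A : Matrix (Fin d) (Fin d) ℂ) :
    Matrix (Fin d) (Fin d) ℂ :=
  cfc Real.log A

open Matrix NormedSpace

namespace AGMaux
variable {d : ℕ}

/-- Quadratic form of a conjugated real diagonal matrix. -/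
lemma quad_conj_diag (U : Matrix (Fin d) (Fin d) ℂ) (c : Fin d → ℝ) (v : Fin d → ℂ) :
    (star v ⬝ᵥ ((U * Matrix.diagonal (Complex.ofReal ∘ c) * star U) *ᵥ v)).re
      = ∑ i, c i * Complex.normSq ((star U *ᵥ v) i) := by
  have hrow : star (star U *ᵥ v) = star v ᵥ* U := by
    rw [Matrix.star_mulVec, Matrix.star_eq_conjTranspose, Matrix.conjTranspose_conjTranspose]
  rw [← Matrix.mulVec_mulVec, ← Matrix.mulVec_mulVec, Matrix.dotProduct_mulVec (star v) U,
    ← hrow]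
  set w := star U *ᵥ v with hw
  simp only [dotProduct, Matrix.mulVec_diagonal, Pi.star_apply, Function.comp_apply,
    Complex.re_sum]
  refine Finset.sum_congr rfl fun i _ => ?_
  have : star (w i) * ((c i : ℂ) * w i) = ((c i * Complex.normSq (w i) : ℝ) : ℂ) := by
    push_cast
    rw [mul_left_comm, Complex.normSq_eq_conj_mul_self]
    rfl
  rw [this, Complex.ofReal_re]

lemma sum_normSq_eq_one {U : Matrix (Fin d) (Fin d) ℂ} (hU : U ∈ Matrix.unitaryGroup (Fin d) ℂ)
    {v : Fin d → ℂ} (hv : star v ⬝ᵥ v = 1) :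
    ∑ i, Complex.normSq ((star U *ᵥ v) i) = 1 := by
  have := quad_conj_diag U (fun _ => 1) v
  simp only [one_mul] at this
  rw [← this]
  have h1 : Matrix.diagonal (Complex.ofReal ∘ fun _ : Fin d => (1:ℝ)) = 1 := by
    ext i j; by_cases h : i = j <;> simp [h, Matrix.diagonal, Matrix.one_apply]
  rw [h1, mul_one, (Matrix.mem_unitaryGroup_iff).mp hU, Matrix.one_mulVec, hv]
  simp

lemma diag_entry_eq (U A : Matrix (Fin d) (Fin d) ℂ) (j : Fin d) :
    (star U * A * U) j j = star (fun i => U i j) ⬝ᵥ (A *ᵥ fun i => U i j) := by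
  simp only [Matrix.mul_apply, Matrix.mulVec, dotProduct, Pi.star_apply,
    Matrix.star_apply, Finset.sum_mul, Finset.mul_sum]
  rw [Finset.sum_comm]
  refine Finset.sum_congr rfl fun p _ => Finset.sum_congr rfl fun q _ => ?_
  simp [Matrix.star_eq_conjTranspose, Matrix.conjTranspose_apply]
  ring

lemma log_quad_le {A : Matrix (Fin d) (Fin d) ℂ} (hA : A.PosDef)
    {v : Fin d → ℂ} (hv : star v ⬝ᵥ v = 1) :
    0 < (star v ⬝ᵥ (A *ᵥ v)).re ∧
    (star v ⬝ᵥ (cfc Real.log A *ᵥ v)).re ≤ Real.log ((star v ⬝ᵥ (A *ᵥ v)).re) := by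
  have h := hA.isHermitian
  set U : Matrix (Fin d) (Fin d) ℂ :=
    ((Matrix.IsHermitian.eigenvectorUnitary h : Matrix.unitaryGroup (Fin d) ℂ) :
      Matrix (Fin d) (Fin d) ℂ) with hUdef
  have hU : U ∈ Matrix.unitaryGroup (Fin d) ℂ := (Matrix.IsHermitian.eigenvectorUnitary h).2
  set lam := h.eigenvalues with hlamdef
  set p := fun i => Complex.normSq ((star U *ᵥ v) i) with hpdef
  have hlog : cfc Real.log A
      = U * Matrix.diagonal (Complex.ofReal ∘ (Real.log ∘ lam)) * star U := by
    rw [h.cfc_eq, Matrix.IsHermitian.cfc]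
    rfl
  have hAeq : A = U * Matrix.diagonal (Complex.ofReal ∘ lam) * star U := by
    have := h.spectral_theorem
    exact this
  have e1 : (star v ⬝ᵥ (cfc Real.log A *ᵥ v)).re = ∑ i, Real.log (lam i) * p i := by
    rw [hlog, quad_conj_diag]; rfl
  have e2 : (star v ⬝ᵥ (A *ᵥ v)).re = ∑ i, lam i * p i := by
    conv_lhs => rw [hAeq]
    rw [quad_conj_diag]
  have hp0 : ∀ i, 0 ≤ p i := fun i => Complex.normSq_nonneg _
  have hp1 : ∑ i, p i = 1 := sum_normSq_eq_one hU hv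
  have hlam : ∀ i, 0 < lam i := hA.eigenvalues_pos
  constructor
  · rw [e2]
    obtain ⟨i, -, hi⟩ := Finset.exists_ne_zero_of_sum_ne_zero (s := Finset.univ)
      (by rw [hp1]; exact one_ne_zero)
    exact Finset.sum_pos' (fun j _ => mul_nonneg (hlam j).le (hp0 j))
      ⟨i, Finset.mem_univ i, mul_pos (hlam i) (lt_of_le_of_ne (hp0 i) (Ne.symm hi))⟩
  · rw [e1, e2]
    have hjen := (strictConcaveOn_log_Ioi.concaveOn).le_map_sum
      (t := Finset.univ) (w := p) (p := lam) (fun i _ => hp0 i) hp1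
      (fun i _ => Set.mem_Ioi.mpr (hlam i))
    simpa [smul_eq_mul, mul_comm] using hjen

end AGMaux

open AGMaux

/-- **Arithmetic–tracial-geometric mean inequality (Section 3).**
Let `d, n > 0` and let `a_1, …, a_n` be positive definite `d × d` complex matrices.  Then
`Tr((a_1 + ⋯ + a_n)/n) ≥ Tr exp((1/n) ∑_{k=1}^n log a_k)`,
i.e. the trace of the arithmetic mean dominates the tracial geometric mean (traces taken as
real numbers via their real parts; `exp` is the matrix exponential). -/
theorem trace_arith_mean_ge_tracialGeometricMean
    {d n : ℕ} (hd : 0 < d) (hn : 0 < n)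
    (a : Fin n → Matrix (Fin d) (Fin d) ℂ) (ha : ∀ k, (a k).PosDef) :
    (Matrix.trace (NormedSpace.exp ((n : ℝ)⁻¹ • ∑ k : Fin n, (a k).cfcLog))).re
      ≤ (Matrix.trace ((n : ℝ)⁻¹ • ∑ k : Fin n, a k)).re := by
  classical
  set L : Fin n → Matrix (Fin d) (Fin d) ℂ := fun k => (a k).cfcLog with hL
  set H : Matrix (Fin d) (Fin d) ℂ := (n : ℝ)⁻¹ • ∑ k, L k with hHdef
  have hLsa : ∀ k, IsSelfAdjoint (L k) := fun k => cfc_predicate Real.log (a k)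
  have hHsa : IsSelfAdjoint H := by
    have hs : _root_.IsSelfAdjoint (∑ k, L k) := by
      rw [isSelfAdjoint_iff, star_sum]
      exact Finset.sum_congr rfl fun k _ => hLsa k
    exact IsSelfAdjoint.smul (star_trivial _) hs
  have hH : H.IsHermitian := hHsa
  set U : Matrix (Fin d) (Fin d) ℂ :=
    ((Matrix.IsHermitian.eigenvectorUnitary hH : Matrix.unitaryGroup (Fin d) ℂ) :
      Matrix (Fin d) (Fin d) ℂ) with hUdef
  have hUmem : U ∈ Matrix.unitaryGroup (Fin d) ℂ := (Matrix.IsHermitian.eigenvectorUnitary hH).2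
  have hUU : U * star U = 1 := (Matrix.mem_unitaryGroup_iff).mp hUmem
  have hUU' : star U * U = 1 := (Matrix.mem_unitaryGroup_iff').mp hUmem
  have hUunit : IsUnit U := ⟨⟨U, star U, hUU, hUU'⟩, rfl⟩
  have hUinv : U⁻¹ = star U := Matrix.inv_eq_left_inv hUU'
  set μ : Fin d → ℝ := hH.eigenvalues with hμdef
  -- the eigenvectors, as plain functions
  set v : Fin d → Fin d → ℂ := fun j i => U i j with hvdef
  have hv1 : ∀ j, star (v j) ⬝ᵥ v j = 1 := by
    intro j
    have h1 : (inner ℂ (hH.eigenvectorBasis j) (hH.eigenvectorBasis j) : ℂ) = 1 := by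
      rw [@inner_self_eq_norm_sq_to_K ℂ]
      rw [hH.eigenvectorBasis.orthonormal.1 j]
      norm_num
    have h2 : v j = ⇑(hH.eigenvectorBasis j) := by
      funext i
      exact hH.eigenvectorUnitary_apply i j
    rw [h2]
    rw [EuclideanSpace.inner_eq_star_dotProduct] at h1
    exact (dotProduct_comm _ _).trans h1
  -- Step 1: trace of the exponential
  have hexp : exp H = U * Matrix.diagonal (fun i => Complex.exp (μ i)) * star U := by
    conv_lhs => rw [hH.spectral_theorem, Unitary.conjStarAlgAut_apply]
    rw [← hUinv, Matrix.exp_conj U _ hUunit, Matrix.exp_diagonal, hUinv]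
    congr 2
    rw [Pi.exp_def]
    funext i
    rw [← Complex.exp_eq_exp_ℂ]
    rfl
  have htrexp : (Matrix.trace (exp H)).re = ∑ i, Real.exp (μ i) := by
    rw [hexp, Matrix.trace_mul_comm, ← mul_assoc, hUU', one_mul, Matrix.trace_diagonal,
      Complex.re_sum]
    exact Finset.sum_congr rfl fun i _ => Complex.exp_ofReal_re (μ i)
  -- Step 2: decomposition of the quadratic form of H
  have hsumvec : ∀ w : Fin d → ℂ, (∑ k, L k) *ᵥ w = ∑ k, L k *ᵥ w := by
    intro w
    funext i
    simp only [Matrix.mulVec, dotProduct, Finset.sum_apply, Matrix.sum_apply,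
      Finset.sum_mul]
    exact Finset.sum_comm
  have hquadH : ∀ w : Fin d → ℂ,
      (star w ⬝ᵥ (H *ᵥ w)).re = (n : ℝ)⁻¹ * ∑ k, (star w ⬝ᵥ (L k *ᵥ w)).re := by
    intro w
    rw [hHdef, Matrix.smul_mulVec, dotProduct_smul, Complex.smul_re, hsumvec]
    congr 1
    have : star w ⬝ᵥ ∑ k, L k *ᵥ w = ∑ k, star w ⬝ᵥ (L k *ᵥ w) := by
      simp only [dotProduct, Finset.sum_apply, Finset.mul_sum]
      exact Finset.sum_comm
    rw [this, Complex.re_sum]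
  -- Step 3: per-eigenvalue estimate
  set x : Fin n → Fin d → ℝ := fun k j => (star (v j) ⬝ᵥ (a k *ᵥ v j)).re with hx
  have hxpos : ∀ k j, 0 < x k j := fun k j => (log_quad_le (ha k) (hv1 j)).1
  have hexp_le : ∀ j, Real.exp (μ j) ≤ ∑ k, (n : ℝ)⁻¹ * x k j := by
    intro j
    have hμj : μ j = (n : ℝ)⁻¹ * ∑ k, (star (v j) ⬝ᵥ (L k *ᵥ v j)).re := by
      have := hH.eigenvalues_eq j
      have h2 : v j = ⇑(hH.eigenvectorBasis j) := by
        funext i; exact hH.eigenvectorUnitary_apply i j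
      rw [← hμdef] at this
      rw [this, ← h2]
      simpa using hquadH (v j)
    have hstep1 : μ j ≤ (n : ℝ)⁻¹ * ∑ k, Real.log (x k j) := by
      rw [hμj]
      have hmono : ∑ k, (star (v j) ⬝ᵥ (L k *ᵥ v j)).re ≤ ∑ k, Real.log (x k j) :=
        Finset.sum_le_sum fun k _ => (log_quad_le (ha k) (hv1 j)).2
      exact mul_le_mul_of_nonneg_left hmono (by positivity)
    calc Real.exp (μ j) ≤ Real.exp ((n : ℝ)⁻¹ * ∑ k, Real.log (x k j)) :=
          Real.exp_le_exp.mpr hstep1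
      _ = Real.exp (∑ k, (n : ℝ)⁻¹ • Real.log (x k j)) := by
          rw [Finset.mul_sum]; simp [smul_eq_mul]
      _ ≤ ∑ k, (n : ℝ)⁻¹ • Real.exp (Real.log (x k j)) := by
          refine convexOn_exp.map_sum_le (fun k _ => by positivity) ?_ (fun k _ => trivial)
          simp [Finset.sum_const, Finset.card_univ]
          field_simp
      _ = ∑ k, (n : ℝ)⁻¹ * x k j := by
          refine Finset.sum_congr rfl fun k _ => ?_
          rw [smul_eq_mul, Real.exp_log (hxpos k j)]
  -- Step 4: the trace of each a k via the eigenbasis of H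
  have htr_a : ∀ k, (Matrix.trace (a k)).re = ∑ j, x k j := by
    intro k
    have h1 : Matrix.trace (a k) = Matrix.trace (star U * a k * U) := by
      rw [Matrix.trace_mul_cycle, hUU, one_mul]
    rw [h1, Matrix.trace, Complex.re_sum]
    refine Finset.sum_congr rfl fun j _ => ?_
    rw [Matrix.diag_apply, diag_entry_eq]
  -- Step 5: the right-hand side
  have hrhs : (Matrix.trace ((n : ℝ)⁻¹ • ∑ k, a k)).re
      = (n : ℝ)⁻¹ * ∑ k, (Matrix.trace (a k)).re := by
    rw [Matrix.trace_smul, Matrix.trace_sum, Complex.smul_re, Complex.re_sum]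
    simp [smul_eq_mul]
  -- Final assembly
  calc (Matrix.trace (exp H)).re = ∑ j, Real.exp (μ j) := htrexp
    _ ≤ ∑ j, ∑ k, (n : ℝ)⁻¹ * x k j := Finset.sum_le_sum fun j _ => hexp_le j
    _ = (n : ℝ)⁻¹ * ∑ k, (Matrix.trace (a k)).re := by
        rw [Finset.sum_comm]
        rw [Finset.mul_sum]
        exact Finset.sum_congr rfl fun k _ => by rw [htr_a k, Finset.mul_sum]
    _ = (Matrix.trace ((n : ℝ)⁻¹ • ∑ k, a k)).re := hrhs.symm
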